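/- arXiv:2601.09551 — 8 statements merged into one kernel-verified Lean document; each statement's English description precedes it below -/
import Mathlib

section
/- Let a_{n,k} be defined by the recurrence a_{n,k} = a_{n,k−1} + (2n+k−1)·a_{n−1,k} for n ≥ 1, 1 ≤ k ≤ n, with a_{n,0} = (2n−1)!! and a_{k−1,k} = 0. Then a_{n,1} = (2n+1)!! − (2n)!! for all n ≥ 1. -/
open Nat

-- Stepping `n` multiplies `(2n)‼` by `2n+2` and `(2n+1)‼` by `2n+3 = (2n+2) + 1`.
theorem eq_doubleFactorial_sub_of_succ (u : ℕ → ℤ) (h0 : u 0 = 0)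
    (hsucc : ∀ n, u (n + 1) = (2 * n + 1)‼ + (2 * n + 2) * u n) (n : ℕ) :
    u n = ((2 * n + 1)‼ : ℤ) - ((2 * n)‼ : ℤ) := by
  induction n with
  | zero => simp [h0]
  | succ n ih =>
    rw [hsucc, ih, show 2 * (n + 1) + 1 = 2 * n + 1 + 2 by ring,
      show 2 * (n + 1) = 2 * n + 2 by ring, doubleFactorial_add_two, doubleFactorial_add_two]
    push_cast
    ring

/-- If `a` satisfies `a n k = a n (k-1) + (2n+k-1) * a (n-1) k` for `1 ≤ k ≤ n`,
with `a n 0 = (2n-1)!!` and `a (k-1) k = 0`, then `a n 1 = (2n+1)!! - (2n)!!`. -/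
theorem stmt1 (a : ℕ → ℕ → ℕ)
    (ha0 : ∀ n, a n 0 = (2 * n - 1)‼)
    (haz : ∀ k, 1 ≤ k → a (k - 1) k = 0)
    (harec : ∀ n k, 1 ≤ n → 1 ≤ k → k ≤ n →
      a n k = a n (k - 1) + (2 * n + k - 1) * a (n - 1) k) :
    ∀ n, 1 ≤ n → (a n 1 : ℤ) = ((2 * n + 1)‼ : ℤ) - ((2 * n)‼ : ℤ) := by
  have hsucc (n : ℕ) : a (n + 1) 1 = (2 * n + 1)‼ + (2 * n + 2) * a n 1 := by
    rw [harec (n + 1) 1 (by omega) le_rfl (by omega), ha0]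
    simp only [add_tsub_cancel_right, show 2 * (n + 1) - 1 = 2 * n + 1 by omega]
    ring
  intro n _
  exact eq_doubleFactorial_sub_of_succ (fun n => a n 1) (by exact_mod_cast haz 1 le_rfl)
    (fun n => by exact_mod_cast hsucc n) n
end

section
/- Let a_{n,k} satisfy a_{n,k} = a_{n,k−1} + (2n+k−1)·a_{n−1,k} with a_{n,0} = (2n−1)!! and a_{k−1,k} = 0. Let γ_k be defined by γ_0 = 1 and γ_k = (1/(3k−3)!!)·(−Σ_{i=1}^{k}(γ_{k−i}/i!)·(3k+i−3)!!). Then for 0 ≤ k ≤ n, a_{n,k} = Σ_{i=0}^{k} (γ_{k−i}/i!)·(2n+k+i−1)!!. -/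
/-!
Write `F k m = closedForm γ k m = ∑_{i ≤ k} γ_{k-i} / i! · (m + i)!!`, so the claim is
`a_{n,k} = F k (2n + k - 1)`.
Splitting `(m + 2 + i)!! = (m + 2)(m + i)!! + i (m + i)!!` and using `i / i! = 1 / (i - 1)!` gives
`F (k+1) (m+2) = F k (m+1) + (m+2) F (k+1) m`, which is the recurrence of `a` at `m = 2n + k - 2`.
The recursion defining `γ_k` says exactly that `F k (3k - 3) = 0`, matching the boundary values
`a_{k-1,k} = 0`, and `γ_0 = 1` makes `F 0 m = m!!` match `a_{n,0}`; induction on `n` and `k`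
concludes.
-/

open Nat Finset

section ClosedForm

variable {K : Type*} [Field K]

def closedForm (γ : ℕ → K) (k m : ℕ) : K :=
  ∑ i ∈ range (k + 1), γ (k - i) / i ! * (((m + i)‼ : ℕ) : K)

theorem closedForm_zero (γ : ℕ → K) (m : ℕ) :
    closedForm γ 0 m = γ 0 * ((m‼ : ℕ) : K) := by
  simp [closedForm]

theorem closedForm_eq_add_sum_Icc (γ : ℕ → K) (k m : ℕ) :
    closedForm γ k m =
      γ k * ((m‼ : ℕ) : K) +
        ∑ i ∈ Icc 1 k, γ (k - i) / i ! * (((m + i)‼ : ℕ) : K) := by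
  rw [closedForm, range_eq_Ico, sum_eq_sum_Ico_succ_bot (by omega : 0 < k + 1),
    Ico_add_one_right_eq_Icc]
  simp

variable [CharZero K]

theorem closedForm_eq_zero_of_eq (γ : ℕ → K) (k m : ℕ)
    (hγ : γ k = 1 / ((m‼ : ℕ) : K) *
      -∑ i ∈ Icc 1 k, γ (k - i) / i ! * (((m + i)‼ : ℕ) : K)) :
    closedForm γ k m = 0 := by
  have : ((m‼ : ℕ) : K) ≠ 0 := by exact_mod_cast (doubleFactorial_pos m).ne'
  rw [closedForm_eq_add_sum_Icc, hγ]
  field_simp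
  ring

theorem closedForm_succ_add_two (γ : ℕ → K) (k m : ℕ) :
    closedForm γ (k + 1) (m + 2) =
      closedForm γ k (m + 1) + (m + 2) * closedForm γ (k + 1) m := by
  have hsplit : ∀ i, γ (k + 1 - i) / i ! * (((m + 2 + i)‼ : ℕ) : K) =
      γ (k + 1 - i) * i / i ! * (((m + i)‼ : ℕ) : K) +
        (m + 2) * (γ (k + 1 - i) / i ! * (((m + i)‼ : ℕ) : K)) := by
    intro i
    rw [show m + 2 + i = m + i + 2 by ring, doubleFactorial_add_two]
    push_cast
    ring
  have hshift : ∑ i ∈ range (k + 2), γ (k + 1 - i) * i / i ! * (((m + i)‼ : ℕ) : K) =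
      closedForm γ k (m + 1) := by
    rw [sum_range_succ', closedForm]
    simp only [cast_zero, mul_zero, zero_div, zero_mul, add_zero]
    refine sum_congr rfl fun i _ ↦ ?_
    rw [factorial_succ, show k + 1 - (i + 1) = k - i by omega, show m + (i + 1) = m + 1 + i by ring]
    have : (i ! : K) ≠ 0 := cast_ne_zero.mpr (factorial_ne_zero i)
    push_cast
    field_simp
  simp only [closedForm, hsplit, sum_add_distrib, ← mul_sum, hshift]

theorem cast_eq_closedForm (a : ℕ → ℕ → ℕ) (γ : ℕ → K)
    (hγ0 : γ 0 = 1)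
    (ha0 : ∀ n, a n 0 = (2 * n - 1)‼)
    (haz : ∀ k, 1 ≤ k → a (k - 1) k = 0)
    (harec : ∀ n k, 1 ≤ n → 1 ≤ k → k ≤ n →
      a n k = a n (k - 1) + (2 * n + k - 1) * a (n - 1) k)
    (hvanish : ∀ k, 1 ≤ k → closedForm γ k (3 * k - 3) = 0) :
    ∀ n k, k ≤ n → (a n k : K) = closedForm γ k (2 * n + k - 1) := by
  intro n
  induction n with
  | zero =>
    intro k hk
    obtain rfl : k = 0 := by omega
    simp [ha0, closedForm_zero, hγ0]
  | succ n ih =>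
    intro k
    induction k with
    | zero => intro _; simp [ha0, closedForm_zero, hγ0]
    | succ k ihk =>
      intro hk
      have hprev : (a n (k + 1) : K) = closedForm γ (k + 1) (2 * n + k) := by
        rcases (show k + 1 ≤ n ∨ n = k by omega) with hlt | rfl
        · simpa [show 2 * n + (k + 1) - 1 = 2 * n + k by omega] using ih (k + 1) hlt
        · have hzero : a n (n + 1) = 0 := haz (n + 1) (by omega)
          rw [hzero, cast_zero, show 2 * n + n = 3 * (n + 1) - 3 by omega,
            hvanish (n + 1) (by omega)]
      rw [harec (n + 1) (k + 1) (by omega) (by omega) hk, add_tsub_cancel_right,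
        add_tsub_cancel_right, cast_add, cast_mul, ihk (by omega), hprev,
        show 2 * (n + 1) + (k + 1) - 1 = 2 * n + k + 2 by omega,
        show 2 * (n + 1) + k - 1 = 2 * n + k + 1 by omega, closedForm_succ_add_two]
      push_cast
      ring

end ClosedForm

/-- Semi-closed-form expression for `a n k`: for `0 ≤ k ≤ n`,
`a n k = ∑_{i=0}^k (γ (k-i)/i!) * (2n+k+i-1)!!`. -/
theorem stmt5 (a : ℕ → ℕ → ℕ)
    (ha0 : ∀ n, a n 0 = (2 * n - 1)‼)
    (haz : ∀ k, 1 ≤ k → a (k - 1) k = 0)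
    (harec : ∀ n k, 1 ≤ n → 1 ≤ k → k ≤ n →
      a n k = a n (k - 1) + (2 * n + k - 1) * a (n - 1) k)
    (γ : ℕ → ℚ) (hγ0 : γ 0 = 1)
    (hγ : ∀ k, 1 ≤ k → γ k = (1 / (((3 * k - 3)‼ : ℕ) : ℚ)) *
      (-∑ i ∈ Finset.Icc 1 k, γ (k - i) / (i ! : ℚ) * (((3 * k + i - 3)‼ : ℕ) : ℚ))) :
    ∀ n k, k ≤ n →
      (a n k : ℚ) =
        ∑ i ∈ Finset.range (k + 1),
          γ (k - i) / (i ! : ℚ) * (((2 * n + k + i - 1)‼ : ℕ) : ℚ) := by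
  have hvanish : ∀ k, 1 ≤ k → closedForm γ k (3 * k - 3) = 0 := fun k hk ↦
    closedForm_eq_zero_of_eq γ k _ <| by
      rw [hγ k hk]
      congr 3 with i
      rw [show 3 * k + i - 3 = 3 * k - 3 + i by omega]
  intro n k hk
  rw [cast_eq_closedForm a γ hγ0 ha0 haz harec hvanish n k hk, closedForm]
  refine sum_congr rfl fun i hi ↦ ?_
  rw [mem_range] at hi
  rw [show 2 * n + k - 1 + i = 2 * n + k + i - 1 by omega]
end

section
/- Define b_{n,m,k} for 0 ≤ k ≤ m ≤ n by the recurrence b_{n,m,k} = (m−k+1)·b_{n,m,k−1} + b_{n,m−1,k} + b_{n−1,m,k} with initial conditions b_{0,0,0} = b_{1,0,0} = b_{1,1,0} = b_{1,1,1} = 1 and b_{m−1,m,k} = b_{n,k−1,k} = 0. Then for k = 0, b_{n,m,0} = (n+m)!·(n−m+1)/(m!·(n+1)!) for all 0 ≤ m ≤ n. -/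
open Nat

lemma stmt6_fact_cast_pos (n : ℕ) : (0:ℚ) < (n ! : ℚ) := by exact_mod_cast Nat.factorial_pos n

lemma stmt6_keylem (n m : ℕ) :
    ((n + 1 + (m + 1))! : ℚ) * ((↑(n+1) : ℚ) - ↑(m+1) + 1) / (((m+1)! : ℚ) * ((n + 1 + 1)! : ℚ))
    = ((n + 1 + m)! : ℚ) * ((↑(n+1) : ℚ) - ↑m + 1) / ((m ! : ℚ) * ((n + 1 + 1)! : ℚ))
      + ((n + (m + 1))! : ℚ) * ((↑n : ℚ) - ↑(m+1) + 1) / (((m+1)! : ℚ) * ((n + 1)! : ℚ)) := by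
  have h1 : (n + 1 + (m + 1)) = (n + 1 + m) + 1 := by ring
  have h2 : (n + (m + 1)) = (n + 1 + m) := by ring
  have h3 : (n + 1 + 1) = (n + 1) + 1 := by ring
  rw [h1, h2, h3, Nat.factorial_succ (n+1+m), Nat.factorial_succ (n+1), Nat.factorial_succ m]
  have hf1 := stmt6_fact_cast_pos (n+1+m)
  have hf2 := stmt6_fact_cast_pos (n+1)
  have hf3 := stmt6_fact_cast_pos m
  push_cast
  field_simp
  ring

/-- If `b n m k` satisfies the recurrence
`b n m k = (m-k+1) * b n m (k-1) + b n (m-1) k + b (n-1) m k`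
(with the convention that terms with a negative index vanish) together with the
initial conditions `b 0 0 0 = b 1 0 0 = b 1 1 0 = b 1 1 1 = 1`,
`b (m-1) m k = 0` and `b n (k-1) k = 0`, then
`b n m 0 = (n+m)! * (n-m+1) / (m! * (n+1)!)` for all `0 ≤ m ≤ n`. -/
theorem stmt6 (b : ℕ → ℕ → ℕ → ℕ)
    (hrec : ∀ n m k, 1 ≤ n → 1 ≤ k → k ≤ m → m ≤ n →
      b n m k = (m - k + 1) * b n m (k - 1) + b n (m - 1) k + b (n - 1) m k)
    (hrec0 : ∀ n m, 1 ≤ n → 1 ≤ m → m ≤ n →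
      b n m 0 = b n (m - 1) 0 + b (n - 1) m 0)
    (hrec00 : ∀ n, 1 ≤ n → b n 0 0 = b (n - 1) 0 0)
    (h000 : b 0 0 0 = 1) (h100 : b 1 0 0 = 1) (h110 : b 1 1 0 = 1) (h111 : b 1 1 1 = 1)
    (hz1 : ∀ m k, 1 ≤ m → b (m - 1) m k = 0)
    (hz2 : ∀ n k, 1 ≤ k → b n (k - 1) k = 0) :
    ∀ n m, m ≤ n →
      (b n m 0 : ℚ) = ((n + m)! : ℚ) * ((n : ℚ) - m + 1) / ((m ! : ℚ) * ((n + 1)! : ℚ)) := by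
  have hb0 : ∀ n, b n 0 0 = 1 := by
    intro n
    induction n with
    | zero => exact h000
    | succ n ih =>
      have := hrec00 (n+1) (by omega)
      simpa using this.trans ih
  have hbase : ∀ n, (b n 0 0 : ℚ)
      = ((n + 0)! : ℚ) * ((n : ℚ) - 0 + 1) / ((0 ! : ℚ) * ((n + 1)! : ℚ)) := by
    intro n
    rw [hb0 n]
    have h3 : (n + 1) = n + 1 := rfl
    rw [Nat.factorial_succ n]
    have hf := stmt6_fact_cast_pos n
    push_cast
    field_simp
    ring
  intro n
  induction n with
  | zero =>
    intro m hm
    interval_cases m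
    exact hbase 0
  | succ n ihn =>
    intro m
    induction m with
    | zero => intro _; exact hbase (n+1)
    | succ m ihm =>
      intro hm
      have hm' : m ≤ n := by omega
      have hrw := hrec0 (n+1) (m+1) (by omega) (by omega) (by omega)
      simp only [Nat.add_sub_cancel] at hrw
      rw [hrw]
      push_cast
      rw [ihm (by omega)]
      have hlast : (b n (m+1) 0 : ℚ)
          = ((n + (m + 1))! : ℚ) * ((↑n : ℚ) - ↑(m+1) + 1) / (((m+1)! : ℚ) * ((n + 1)! : ℚ)) := by
        rcases Nat.lt_or_ge m n with h | h
        · have h2 := ihn (m+1) (by omega)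
          push_cast at h2 ⊢
          linarith
        · have hmn : m = n := le_antisymm hm' h
          subst hmn
          have hz := hz1 (m+1) 0 (by omega)
          simp only [Nat.add_sub_cancel] at hz
          rw [hz]
          push_cast
          simp
      rw [hlast]
      have := stmt6_keylem n m
      push_cast at this ⊢
      linarith [this]
end

section
/- For nonnegative integers n and k with k ≥ 1 (so that all terms are integers), the following identity holds: Σ_{p=1}^{⌈(n+1)/2⌉} Σ_{q=1}^{min(n+3−2p, k+1−i)} ((−1)^{q−p}·2^{n−p}/((n+3−2p−q)!·(p−1)!)) · binom(k−i, q−1) · (2n+4k−2p−2q+1−i)!!/(4k−3−i)!! = 2^{n−1}·binom(n+3k−2, n), for every integer i with 0 ≤ i ≤ k. -/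
open Nat Finset

/-!
Put `p = w + 1`, `q = m + 1`, `N = n - m` and `u = 4k - 1 - i`. The ratio of double factorials is
the step-two product `u (u + 2) ⋯ (u + 2(N - w - 1))`, and the powers of two and the factorials
combine into `2^(n-1) (-1)^w M(N, w) / N!`, where `M(N, w) = C(N, 2w) (2w - 1)!!` counts the
`w`-edge matchings on `N` points. The recurrence `M(N+1, w+1) = M(N, w+1) + (N - 2w) M(N, w)`
gives `∑_w (-1)^w M(N, w) u (u + 2) ⋯ (u + 2(N - w - 1)) = u (u + 1) ⋯ (u + N - 1)`, so the
sum over `p` collapses to `2^(n-1) (-1)^m C(k - i, m) C(u - 1 + N, N)`. The remaining sum over `m`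
is the Chu–Vandermonde convolution of `C(k - i, ·)` with `C(-u, ·)`, which equals
`C(-(3k - 1), n) = (-1)^n C(n + 3k - 2, n)`.
-/

theorem sum_Icc_one_eq_sum_range {M : Type*} [AddCommMonoid M] (f : ℕ → M) (b : ℕ) :
    ∑ x ∈ Icc 1 b, f x = ∑ x ∈ range b, f (x + 1) := by
  rw [range_eq_Ico, sum_Ico_add' f 0 b 1, zero_add, Ico_add_one_right_eq_Icc]

theorem doubleFactorial_add_two_mul_div {K : Type*} [Field K] [CharZero K] (a m : ℕ) :
    ((a + 2 * m)‼ : K) / a‼ = ∏ j ∈ range m, ((a : K) + 2 + 2 * j) := by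
  induction m with
  | zero => simp [(Nat.doubleFactorial_pos a).ne']
  | succ m ih =>
    rw [show a + 2 * (m + 1) = a + 2 * m + 2 by ring, Nat.doubleFactorial_add_two, Nat.cast_mul,
      mul_div_assoc, ih, prod_range_succ]
    push_cast
    ring

theorem prod_range_natCast_add_one_add {R : Type*} [CommSemiring R] (c N : ℕ) :
    ∏ t ∈ range N, ((c : R) + 1 + t) = (N ! * (c + N).choose N : ℕ) := by
  rw [← Nat.ascFactorial_eq_factorial_mul_choose, Nat.ascFactorial_eq_prod_range]
  push_cast
  rfl

theorem sum_range_neg_one_pow_mul_choose_mul_choose (x d n : ℕ) :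
    ∑ m ∈ range (n + 1), (-1 : ℤ) ^ m * x.choose m * (d + x + (n - m)).choose (n - m) =
      (d + n).choose n := by
  have choose_neg_natCast (a b : ℕ) :
      Ring.choose (-((a + 1 : ℕ) : ℤ)) b = (-1) ^ b * (a + b).choose b := by
    rw [Ring.choose_neg, Units.smul_def, Int.coe_negOnePow_natCast, smul_eq_mul,
      show ((a + 1 : ℕ) : ℤ) + b - 1 = ((a + b : ℕ) : ℤ) by push_cast; ring, Ring.choose_natCast]
  have vandermonde :=
    Ring.add_choose_eq (r := (x : ℤ)) (s := -((d + x + 1 : ℕ) : ℤ)) n (Commute.all _ _)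
  rw [show (x : ℤ) + -((d + x + 1 : ℕ) : ℤ) = -((d + 1 : ℕ) : ℤ) by push_cast; ring,
    Nat.sum_antidiagonal_eq_sum_range_succ_mk] at vandermonde
  simp only [Ring.choose_natCast, choose_neg_natCast] at vandermonde
  have sign {m : ℕ} (hm : m ≤ n) : (-1 : ℤ) ^ n * (-1) ^ (n - m) = (-1) ^ m := by
    rw [← pow_add, show n + (n - m) = m + 2 * (n - m) by omega, pow_add, pow_mul]
    simp
  calc _ = (-1) ^ n * ∑ m ∈ range (n + 1),
        (x.choose m : ℤ) * ((-1) ^ (n - m) * (d + x + (n - m)).choose (n - m)) := by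
        rw [mul_sum]
        refine sum_congr rfl fun m hm => ?_
        rw [← sign (by grind)]
        ring
    _ = _ := by rw [← vandermonde, ← mul_assoc, ← pow_add, Even.neg_one_pow ⟨n, rfl⟩, one_mul]

-- The number of `w`-edge matchings on `N` points; up to sign, the coefficients of the Hermite
-- polynomial `He_N`.
def matchingCoeff (N w : ℕ) : ℕ := N.choose (2 * w) * (2 * w - 1)‼

theorem matchingCoeff_zero_right (N : ℕ) : matchingCoeff N 0 = 1 := by
  simp [matchingCoeff]

theorem matchingCoeff_eq_zero_of_lt {N w : ℕ} (h : N < 2 * w) : matchingCoeff N w = 0 := by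
  simp [matchingCoeff, Nat.choose_eq_zero_of_lt h]

theorem matchingCoeff_succ_succ (N w : ℕ) :
    matchingCoeff (N + 1) (w + 1) = matchingCoeff N (w + 1) + (N - 2 * w) * matchingCoeff N w := by
  rw [matchingCoeff, matchingCoeff, matchingCoeff, show 2 * (w + 1) = 2 * w + 1 + 1 by ring,
    Nat.add_sub_cancel, Nat.choose_succ_succ', add_mul, Nat.doubleFactorial_add_one, ← mul_assoc (N.choose _),
    Nat.choose_succ_right_eq]
  ring

theorem matchingCoeff_mul_factorial_mul_factorial {N w : ℕ} (h : 2 * w ≤ N) :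
    matchingCoeff N w * ((N - 2 * w)! * (w ! * 2 ^ w)) = N ! := by
  have heven : (2 * w)! = (2 * w - 1)‼ * (w ! * 2 ^ w) := by
    rcases w with _ | w
    · rfl
    · rw [show 2 * (w + 1) = 2 * w + 1 + 1 by ring, Nat.factorial_eq_mul_doubleFactorial,
        Nat.add_sub_cancel, ← show 2 * (w + 1) = 2 * w + 1 + 1 by ring,
        Nat.doubleFactorial_two_mul]
      ring
  rw [← Nat.choose_mul_factorial_mul_factorial h, heven, matchingCoeff]
  ring

section CommRing

variable {R : Type*} [CommRing R]

theorem matchingCoeff_succ_succ_cast (N w : ℕ) :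
    (matchingCoeff (N + 1) (w + 1) : R) =
      matchingCoeff N (w + 1) + ((N : R) - 2 * w) * matchingCoeff N w := by
  rw [matchingCoeff_succ_succ]
  rcases le_or_gt (2 * w) N with h | h
  · push_cast [Nat.cast_sub h]; ring
  · simp [matchingCoeff_eq_zero_of_lt h]

theorem sum_neg_one_pow_mul_matchingCoeff_mul_prod (u : R) (N : ℕ) :
    ∑ w ∈ range (N + 1), (-1) ^ w * (matchingCoeff N w : R) * ∏ j ∈ range (N - w), (u + 2 * j) =
      ∏ t ∈ range N, (u + t) := by
  induction N with
  | zero => simp [matchingCoeff_zero_right]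
  | succ N ih =>
    have shift : ∑ w ∈ range (N + 1),
        (-1) ^ w * (matchingCoeff N w : R) * ∏ j ∈ range (N + 1 - w), (u + 2 * j) =
        ∑ w ∈ range (N + 1),
          (-1) ^ (w + 1) * (matchingCoeff N (w + 1) : R) * ∏ j ∈ range (N - w), (u + 2 * j) +
          ∏ j ∈ range (N + 1), (u + 2 * j) := by
      have top : (-1) ^ (N + 1) * (matchingCoeff N (N + 1) : R) *
          ∏ j ∈ range (N + 1 - (N + 1)), (u + 2 * j) = 0 := by
        simp [matchingCoeff_eq_zero_of_lt (show N < 2 * (N + 1) by omega)]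
      rw [← add_zero (∑ w ∈ range (N + 1), _), ← top, ← sum_range_succ, sum_range_succ']
      simp [matchingCoeff_zero_right]
    have split (w : ℕ) (hw : w ∈ range (N + 1)) :
        (-1) ^ w * (matchingCoeff N w : R) * ∏ j ∈ range (N + 1 - w), (u + 2 * j) -
          (-1) ^ w * ((N : R) - 2 * w) * matchingCoeff N w * ∏ j ∈ range (N - w), (u + 2 * j) =
        (-1) ^ w * (matchingCoeff N w : R) * (∏ j ∈ range (N - w), (u + 2 * j)) * (u + N) := by
      rw [show N + 1 - w = N - w + 1 by grind, prod_range_succ, Nat.cast_sub (by grind)]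
      ring
    calc _ = ∑ w ∈ range (N + 1), (-1) ^ (w + 1) * (matchingCoeff (N + 1) (w + 1) : R) *
              ∏ j ∈ range (N - w), (u + 2 * j) + ∏ j ∈ range (N + 1), (u + 2 * j) := by
          simp [sum_range_succ' _ (N + 1), matchingCoeff_zero_right]
      _ = ∑ w ∈ range (N + 1),
            (-1) ^ w * (matchingCoeff N w : R) * ∏ j ∈ range (N + 1 - w), (u + 2 * j) -
          ∑ w ∈ range (N + 1), (-1) ^ w * ((N : R) - 2 * w) * matchingCoeff N w *
            ∏ j ∈ range (N - w), (u + 2 * j) := by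
          rw [shift, add_sub_right_comm, ← sum_sub_distrib]
          congr 1
          refine sum_congr rfl fun w _ => ?_
          rw [matchingCoeff_succ_succ_cast]
          ring
      _ = _ := by
          rw [← sum_sub_distrib, sum_congr rfl split, ← sum_mul, ih, prod_range_succ]

theorem sum_range_half_neg_one_pow_mul_matchingCoeff_mul_prod (u : R) (N : ℕ) :
    ∑ w ∈ range (N / 2 + 1), (-1) ^ w * (matchingCoeff N w : R) *
      ∏ j ∈ range (N - w), (u + 2 * j) = ∏ t ∈ range N, (u + t) := by
  rw [← sum_neg_one_pow_mul_matchingCoeff_mul_prod]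
  refine sum_subset (range_subset_range.2 (by omega)) fun w hw hw' => ?_
  simp [matchingCoeff_eq_zero_of_lt (show N < 2 * w by simp at hw hw'; omega)]

end CommRing

theorem two_zpow_div_factorial_mul_factorial {N w : ℕ} (n : ℕ) (h : 2 * w ≤ N) :
    (2 : ℚ) ^ ((n : ℤ) - (w + 1 : ℕ)) / ((N - 2 * w)! * w !) =
      2 ^ ((n : ℤ) - 1) / N ! * matchingCoeff N w := by
  have hN := congrArg (Nat.cast : ℕ → ℚ) (matchingCoeff_mul_factorial_mul_factorial h)
  have hpos : 0 < matchingCoeff N w := Nat.mul_pos (Nat.choose_pos h) (Nat.doubleFactorial_pos _)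
  push_cast at hN
  rw [← hN, show (n : ℤ) - (w + 1 : ℕ) = (n : ℤ) - 1 - w by push_cast; ring,
    zpow_sub₀ two_ne_zero, zpow_natCast]
  field_simp

def identityTerm (n k i p q : ℕ) : ℚ :=
  (-1 : ℚ) ^ (q + p) * (2 : ℚ) ^ ((n : ℤ) - (p : ℤ)) /
      ((((n + 3 - 2 * p - q)! : ℕ) : ℚ) * (((p - 1)! : ℕ) : ℚ)) *
    (((k - i).choose (q - 1) : ℕ) : ℚ) *
    ((((2 * n + 4 * k + 1 - 2 * p - 2 * q - i)‼ : ℕ) : ℚ) / (((4 * k - 3 - i)‼ : ℕ) : ℚ))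

theorem identityTerm_succ_succ {n k i w m : ℕ} (hk : 1 ≤ k) (hi : i ≤ k) (h : 2 * w + m ≤ n) :
    identityTerm n k i (w + 1) (m + 1) =
      2 ^ ((n : ℤ) - 1) * (-1) ^ m * (k - i).choose m / (n - m)! *
        ((-1) ^ w * matchingCoeff (n - m) w *
          ∏ j ∈ range (n - m - w), (((4 * k - 3 - i : ℕ) : ℚ) + 2 + 2 * j)) := by
  rw [identityTerm, show n + 3 - 2 * (w + 1) - (m + 1) = n - m - 2 * w by omega,
    show 2 * n + 4 * k + 1 - 2 * (w + 1) - 2 * (m + 1) - i = 4 * k - 3 - i + 2 * (n - m - w) by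
      omega, Nat.add_sub_cancel, Nat.add_sub_cancel, doubleFactorial_add_two_mul_div,
    mul_div_assoc, two_zpow_div_factorial_mul_factorial n (by omega : 2 * w ≤ n - m)]
  ring

theorem sum_identityTerm_succ {n k i m : ℕ} (hk : 1 ≤ k) (hi : i ≤ k) (hm : m ≤ n) :
    ∑ w ∈ range ((n - m) / 2 + 1), identityTerm n k i (w + 1) (m + 1) =
      2 ^ ((n : ℤ) - 1) *
        ((-1) ^ m * (k - i).choose m * (3 * k - 2 + (k - i) + (n - m)).choose (n - m)) := by
  rw [sum_congr rfl fun w hw => identityTerm_succ_succ hk hi (by simp at hw; omega), ← mul_sum,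
    sum_range_half_neg_one_pow_mul_matchingCoeff_mul_prod,
    show ((4 * k - 3 - i : ℕ) : ℚ) + 2 = ((3 * k - 2 + (k - i) : ℕ) : ℚ) + 1 by
      rw [← show 4 * k - 3 - i + 1 = 3 * k - 2 + (k - i) by omega]; push_cast; ring,
    prod_range_natCast_add_one_add]
  have : ((n - m)! : ℚ) ≠ 0 := by positivity
  push_cast
  field_simp

/-- The key combinatorial identity (Lemma 2.8): for `n ≥ 0`, `k ≥ 1` and
`0 ≤ i ≤ k`,
`∑_{p=1}^{⌈(n+1)/2⌉} ∑_{q=1}^{min(n+3-2p,k+1-i)}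
  ((-1)^(q-p) * 2^(n-p) / ((n+3-2p-q)! * (p-1)!)) * C(k-i,q-1)
    * (2n+4k-2p-2q+1-i)!!/(4k-3-i)!! = 2^(n-1) * C(n+3k-2, n)`. -/
theorem stmt12 (n k i : ℕ) (hk : 1 ≤ k) (hi : i ≤ k) :
    ∑ p ∈ Finset.Icc 1 ((n + 2) / 2),
      ∑ q ∈ Finset.Icc 1 (min (n + 3 - 2 * p) (k + 1 - i)),
        (-1 : ℚ) ^ (q + p) * (2 : ℚ) ^ ((n : ℤ) - (p : ℤ)) /
            ((((n + 3 - 2 * p - q)! : ℕ) : ℚ) * (((p - 1)! : ℕ) : ℚ)) *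
          (((k - i).choose (q - 1) : ℕ) : ℚ) *
          ((((2 * n + 4 * k + 1 - 2 * p - 2 * q - i)‼ : ℕ) : ℚ) /
            (((4 * k - 3 - i)‼ : ℕ) : ℚ)) =
      (2 : ℚ) ^ ((n : ℤ) - 1) * (((n + 3 * k - 2).choose n : ℕ) : ℚ) := by
  have drop_min (p : ℕ) : ∑ q ∈ Icc 1 (min (n + 3 - 2 * p) (k + 1 - i)), identityTerm n k i p q =
      ∑ q ∈ Icc 1 (n + 3 - 2 * p), identityTerm n k i p q :=
    sum_subset (Icc_subset_Icc_right (min_le_left _ _)) fun q hq hq' => by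
      simp [identityTerm, Nat.choose_eq_zero_of_lt (show k - i < q - 1 by simp at hq hq'; omega)]
  have vandermonde := sum_range_neg_one_pow_mul_choose_mul_choose (k - i) (3 * k - 2) n
  rw [show 3 * k - 2 + n = n + 3 * k - 2 by omega] at vandermonde
  show ∑ p ∈ Icc 1 ((n + 2) / 2), ∑ q ∈ Icc 1 (min (n + 3 - 2 * p) (k + 1 - i)),
    identityTerm n k i p q = _
  calc _ = ∑ w ∈ range ((n + 2) / 2), ∑ m ∈ range (n + 3 - 2 * (w + 1)),
          identityTerm n k i (w + 1) (m + 1) := by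
        simp only [drop_min, sum_Icc_one_eq_sum_range]
    _ = ∑ m ∈ range (n + 1), ∑ w ∈ range ((n - m) / 2 + 1),
          identityTerm n k i (w + 1) (m + 1) :=
        sum_comm' fun w m => by simp only [mem_range]; omega
    _ = ∑ m ∈ range (n + 1), (2 : ℚ) ^ ((n : ℤ) - 1) *
          ((-1) ^ m * (k - i).choose m * (3 * k - 2 + (k - i) + (n - m)).choose (n - m)) :=
        sum_congr rfl fun m hm => sum_identityTerm_succ hk hi (by simp at hm; omega)
    _ = _ := by
        rw [← mul_sum]
        exact_mod_cast congrArg (fun z : ℤ => (2 : ℚ) ^ ((n : ℤ) - 1) * z) vandermonde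
end

section
/- Define the coefficients α_s(p,q) = (−1)^{q−p+1}·(s−1+q−p)! / ((s−q−2p+2)!·(q−1)!·2^{q−1}·(p−1)!). Then for all s ≥ 1, 1 ≤ p ≤ ⌈s/2⌉ and 2 ≤ q ≤ s+2−2p: α_{s−1}(p−1,q) − α_s(p,q) + α_s(p,q−1)·(s+q−p−1) = −α_{s+1}(p,q) (valid when p ≥ 2), and for p = 1: −α_s(1,q) + α_s(1,q−1)·(s+q−2) = −α_{s+1}(1,q). -/
open Nat

/-- Coefficient identities for
`α s p q = (-1)^(q-p+1) * (s-1+q-p)! / ((s-q-2p+2)! * (q-1)! * 2^(q-1) * (p-1)!)`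
(with `α s p q = 0` when `s - q - 2p + 2 < 0`): for all `s ≥ 1`,
`1 ≤ p ≤ ⌈s/2⌉` and `2 ≤ q ≤ s+2-2p`, one has, when `p ≥ 2`,
`α (s-1) (p-1) q - α s p q + α s p (q-1) * (s+q-p-1) = -α (s+1) p q`,
and for `p = 1`,
`-α s 1 q + α s 1 (q-1) * (s+q-2) = -α (s+1) 1 q`. -/
theorem stmt13 (α : ℕ → ℕ → ℕ → ℚ)
    (hα : ∀ s p q, α s p q =
      if q + 2 * p ≤ s + 2 then
        (-1 : ℚ) ^ (q + p + 1) * (((s + q - 1 - p)! : ℕ) : ℚ) /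
          ((((s + 2 - q - 2 * p)! : ℕ) : ℚ) * (((q - 1)! : ℕ) : ℚ) *
            (2 : ℚ) ^ (q - 1) * (((p - 1)! : ℕ) : ℚ))
      else 0) :
    (∀ s p q, 1 ≤ s → 2 ≤ p → p ≤ (s + 1) / 2 → 2 ≤ q → q ≤ s + 2 - 2 * p →
      α (s - 1) (p - 1) q - α s p q + α s p (q - 1) * ((s + q - 1 - p : ℕ) : ℚ) =
        -α (s + 1) p q) ∧
    (∀ s q, 1 ≤ s → 2 ≤ q → q ≤ s →
      -α s 1 q + α s 1 (q - 1) * ((s + q - 2 : ℕ) : ℚ) = -α (s + 1) 1 q) := by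
  constructor
  · intro s p q hs hp hps hq hqs
    obtain ⟨p', rfl⟩ : ∃ p', p = p' + 2 := ⟨p - 2, by omega⟩
    obtain ⟨q', rfl⟩ : ∃ q', q = q' + 2 := ⟨q - 2, by omega⟩
    obtain ⟨m, rfl⟩ : ∃ m, s = m + q' + 2*p' + 4 := ⟨s - q' - 2*p' - 4, by omega⟩
    rw [hα, hα, hα, hα, if_pos (by omega), if_pos (by omega), if_pos (by omega),
      if_pos (by omega)]
    rw [show m + q' + 2 * p' + 4 - 1 + (q' + 2) - 1 - (p' + 2 - 1) = m+2*q'+p'+3 from by omega,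
        show m + q' + 2 * p' + 4 - 1 + 2 - (q' + 2) - 2 * (p' + 2 - 1) = m+1 from by omega,
        show q' + 2 + (p' + 2 - 1) + 1 = q'+p'+4 from by omega,
        show p' + 2 - 1 - 1 = p' from by omega,
        show q' + 2 - 1 - 1 = q' from by omega,
        show m + q' + 2 * p' + 4 + (q' + 2) - 1 - (p' + 2) = m+2*q'+p'+3 from by omega,
        show m + q' + 2 * p' + 4 + 2 - (q' + 2) - 2 * (p' + 2) = m from by omega,
        show m + q' + 2 * p' + 4 + (q' + 2 - 1) - 1 - (p' + 2) = m+2*q'+p'+2 from by omega,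
        show m + q' + 2 * p' + 4 + 2 - (q' + 2 - 1) - 2 * (p' + 2) = m+1 from by omega,
        show m + q' + 2 * p' + 4 + 1 + (q' + 2) - 1 - (p' + 2) = m+2*q'+p'+4 from by omega,
        show m + q' + 2 * p' + 4 + 1 + 2 - (q' + 2) - 2 * (p' + 2) = m+1 from by omega,
        show q' + 2 + (p' + 2) + 1 = q'+p'+5 from by omega,
        show q' + 2 - 1 + (p' + 2) + 1 = q'+p'+4 from by omega,
        show q' + 2 - 1 = q'+1 from by omega,
        show p' + 2 - 1 = p'+1 from by omega]
    have h4 : ((m+2*q'+p'+4)! : ℚ) = (↑(m+2*q'+p'+4) : ℚ) * ((m+2*q'+p'+3)! : ℚ) := by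
      rw [show m+2*q'+p'+4 = (m+2*q'+p'+3)+1 from by omega, Nat.factorial_succ]; push_cast; ring
    have h3 : ((m+2*q'+p'+3)! : ℚ) = (↑(m+2*q'+p'+3) : ℚ) * ((m+2*q'+p'+2)! : ℚ) := by
      rw [show m+2*q'+p'+3 = (m+2*q'+p'+2)+1 from by omega, Nat.factorial_succ]; push_cast; ring
    have hm1 : ((m+1)! : ℚ) = (↑(m+1) : ℚ) * ((m)! : ℚ) := by
      rw [Nat.factorial_succ]; push_cast; ring
    have hq1 : ((q'+1)! : ℚ) = (↑(q'+1) : ℚ) * ((q')! : ℚ) := by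
      rw [Nat.factorial_succ]; push_cast; ring
    have hp1 : ((p'+1)! : ℚ) = (↑(p'+1) : ℚ) * ((p')! : ℚ) := by
      rw [Nat.factorial_succ]; push_cast; ring
    have hs5 : ((-1 : ℚ)) ^ (q'+p'+5) = -((-1:ℚ)) ^ (q'+p'+4) := by
      rw [show q'+p'+5 = (q'+p'+4)+1 from by omega, pow_succ]; ring
    have hpow : ((2 : ℚ)) ^ (q'+1) = 2 * (2:ℚ) ^ q' := by rw [pow_succ]; ring
    rw [h4, h3, hm1, hq1, hp1, hs5, hpow]
    have n1 : ((m ! : ℕ) : ℚ) ≠ 0 := Nat.cast_ne_zero.mpr (Nat.factorial_ne_zero _)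
    have n2 : (((m+2*q'+p'+2)! : ℕ) : ℚ) ≠ 0 := Nat.cast_ne_zero.mpr (Nat.factorial_ne_zero _)
    have n3 : ((q' ! : ℕ) : ℚ) ≠ 0 := Nat.cast_ne_zero.mpr (Nat.factorial_ne_zero _)
    have n4 : ((p' ! : ℕ) : ℚ) ≠ 0 := Nat.cast_ne_zero.mpr (Nat.factorial_ne_zero _)
    have n5 : ((2:ℚ)) ^ q' ≠ 0 := by positivity
    push_cast
    field_simp
    ring
  · intro s q hs hq hqs
    obtain ⟨q', rfl⟩ : ∃ q', q = q' + 2 := ⟨q - 2, by omega⟩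
    obtain ⟨m, rfl⟩ : ∃ m, s = m + q' + 2 := ⟨s - q' - 2, by omega⟩
    rw [hα, hα, hα, if_pos (by omega), if_pos (by omega), if_pos (by omega)]
    rw [show m + q' + 2 + (q' + 2) - 1 - 1 = m+2*q'+2 from by omega,
        show m + q' + 2 + 2 - (q' + 2) - 2 * 1 = m from by omega,
        show m + q' + 2 + (q' + 2 - 1) - 1 - 1 = m+2*q'+1 from by omega,
        show m + q' + 2 + 2 - (q' + 2 - 1) - 2 * 1 = m+1 from by omega,
        show m + q' + 2 + (q' + 2) - 2 = m+2*q'+2 from by omega,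
        show m + q' + 2 + 1 + (q' + 2) - 1 - 1 = m+2*q'+3 from by omega,
        show m + q' + 2 + 1 + 2 - (q' + 2) - 2 * 1 = m+1 from by omega,
        show q' + 2 + 1 + 1 = q'+4 from by omega,
        show q' + 2 - 1 + 1 + 1 = q'+3 from by omega,
        show q' + 2 - 1 - 1 = q' from by omega,
        show q' + 2 - 1 = q'+1 from by omega,
        show (1:ℕ) - 1 = 0 from rfl, Nat.factorial_zero, Nat.cast_one]
    have h3 : ((m+2*q'+3)! : ℚ) = (↑(m+2*q'+3) : ℚ) * ((m+2*q'+2)! : ℚ) := by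
      rw [show m+2*q'+3 = (m+2*q'+2)+1 from by omega, Nat.factorial_succ]; push_cast; ring
    have h2 : ((m+2*q'+2)! : ℚ) = (↑(m+2*q'+2) : ℚ) * ((m+2*q'+1)! : ℚ) := by
      rw [show m+2*q'+2 = (m+2*q'+1)+1 from by omega, Nat.factorial_succ]; push_cast; ring
    have hm1 : ((m+1)! : ℚ) = (↑(m+1) : ℚ) * ((m)! : ℚ) := by
      rw [Nat.factorial_succ]; push_cast; ring
    have hq1 : ((q'+1)! : ℚ) = (↑(q'+1) : ℚ) * ((q')! : ℚ) := by
      rw [Nat.factorial_succ]; push_cast; ring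
    have hs4 : ((-1 : ℚ)) ^ (q'+4) = -((-1:ℚ)) ^ (q'+3) := by
      rw [show q'+4 = (q'+3)+1 from by omega, pow_succ]; ring
    have hpow : ((2 : ℚ)) ^ (q'+1) = 2 * (2:ℚ) ^ q' := by rw [pow_succ]; ring
    rw [h3, h2, hm1, hq1, hs4, hpow]
    have n1 : ((m ! : ℕ) : ℚ) ≠ 0 := Nat.cast_ne_zero.mpr (Nat.factorial_ne_zero _)
    have n2 : (((m+2*q'+1)! : ℕ) : ℚ) ≠ 0 := Nat.cast_ne_zero.mpr (Nat.factorial_ne_zero _)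
    have n3 : ((q' ! : ℕ) : ℚ) ≠ 0 := Nat.cast_ne_zero.mpr (Nat.factorial_ne_zero _)
    have n5 : ((2:ℚ)) ^ q' ≠ 0 := by positivity
    push_cast
    field_simp
    ring
end

section
/- Let C(x) = Σ_{n≥0} Cat(n) x^n = (1−√(1−4x))/(2x) be the Catalan generating function, and b_{n,m,0} = (n+m)!·(n−m+1)/(m!·(n+1)!). Then Σ_{0≤m≤n} b_{n,m,0} x^n y^m = (1 − y·C(xy))/(1 − x − y) as formal power series. -/
/-!
The numbers `b n m = C(n+m, m) - C(n+m, m-1)` are the ballot numbers: they satisfy Pascal's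
recurrence `b (n+1) (m+1) = b n (m+1) + b (n+1) m`, equal `1` on the edge `m = 0`, vanish on the
line `m = n + 1` and equal `Cat n` on the diagonal. Hence the coefficient of `x^n y^m` in
`(1 - x - y) F` is `b n m - b (n-1) m - b n (m-1)` with `b` cut off to the triangle `m ≤ n`,
which vanishes except at the origin (value `1`) and just above the diagonal, where the cut-off
leaves `-b n n = -Cat n`, the coefficient of `x^n y^(n+1)` in `-y C(xy)`.
-/

open Nat

namespace MvPowerSeries

variable {σ R : Type*} [Semiring R] (f : MvPowerSeries σ R) (s : σ) (d : σ →₀ ℕ)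

theorem coeff_single_add_X_mul : coeff (Finsupp.single s 1 + d) (X s * f) = coeff d f := by
  rw [X_def, coeff_add_monomial_mul, one_mul]

theorem coeff_X_mul_of_apply_eq_zero (h : d s = 0) : coeff d (X s * f) = 0 := by
  rw [X_def, coeff_monomial_mul, if_neg]
  intro hle
  simpa [h] using hle s

end MvPowerSeries

section Bivariate

open MvPowerSeries Finsupp

theorem Finsupp.eq_single_zero_add_single_one {M : Type*} [AddZeroClass M] (d : Fin 2 →₀ M) :
    d = single 0 (d 0) + single 1 (d 1) := by
  ext i; fin_cases i <;> simp

variable {R : Type*} [Semiring R] (f : MvPowerSeries (Fin 2) R) (n m : ℕ)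

theorem coeff_X_zero_mul_single_succ :
    coeff (single 0 (n + 1) + single 1 m) (X 0 * f) = coeff (single 0 n + single 1 m) f := by
  rw [← coeff_single_add_X_mul f 0, single_add, add_comm (single 0 n), add_assoc]

theorem coeff_X_one_mul_single_succ :
    coeff (single 0 n + single 1 (m + 1)) (X 1 * f) = coeff (single 0 n + single 1 m) f := by
  rw [← coeff_single_add_X_mul f 1, single_add, add_comm (single 1 1), add_assoc]

theorem coeff_X_zero_mul_single_zero : coeff (single 0 0 + single 1 m) (X 0 * f) = 0 :=
  coeff_X_mul_of_apply_eq_zero f 0 _ (by simp)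

theorem coeff_X_one_mul_single_zero : coeff (single 0 n + single 1 0) (X 1 * f) = 0 :=
  coeff_X_mul_of_apply_eq_zero f 1 _ (by simp)

theorem coeff_one_single_add_single :
    coeff (single 0 n + single 1 m) (1 : MvPowerSeries (Fin 2) R) =
      if n = 0 ∧ m = 0 then 1 else 0 := by
  simp [coeff_one, Finsupp.ext_iff, Fin.forall_fin_two]

end Bivariate

/-- `choose (n + m) (n + 1)` is `choose (n + m) (m - 1)`, written so that no truncated
subtraction occurs at `m = 0`. -/
def ballot (n m : ℕ) : ℚ := (n + m).choose m - (n + m).choose (n + 1)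

theorem ballot_succ_succ (n m : ℕ) :
    ballot (n + 1) (m + 1) = ballot n (m + 1) + ballot (n + 1) m := by
  simp only [ballot, show n + 1 + (m + 1) = n + (m + 1) + 1 by omega,
    show n + (m + 1) = n + 1 + m by omega, Nat.choose_succ_succ', Nat.cast_add]
  ring

theorem ballot_zero_right (n : ℕ) : ballot n 0 = 1 := by
  simp [ballot]

theorem ballot_self_succ (n : ℕ) : ballot n (n + 1) = 0 := by
  simp [ballot]

theorem ballot_self (n : ℕ) : ballot n n = catalan n := by
  have hcat : ((n : ℚ) + 1) * catalan n = (2 * n).choose n := by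
    exact_mod_cast (Nat.centralBinom_eq_two_mul_choose n) ▸ succ_mul_catalan_eq_centralBinom n
  have hsymm : ((2 * n).choose (n + 1) : ℚ) * (n + 1) = (2 * n).choose n * n := by
    exact_mod_cast (show (2 * n).choose (n + 1) * (n + 1) = (2 * n).choose n * n by
      rw [Nat.choose_succ_right_eq]; congr 1; omega)
  rw [ballot, ← two_mul]
  refine mul_left_cancel₀ (show (n : ℚ) + 1 ≠ 0 by positivity) ?_
  linear_combination -hsymm - hcat

theorem ballot_eq_factorial {n m : ℕ} (h : m ≤ n + 1) :
    ballot n m = (n + m)! * ((n : ℚ) - m + 1) / (m ! * (n + 1)!) := by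
  rcases m with _ | k
  · simp [ballot, Nat.factorial_succ]
    field_simp
  · rw [ballot, Nat.cast_choose ℚ (by omega : k + 1 ≤ n + (k + 1)),
      Nat.cast_choose ℚ (by omega : n + 1 ≤ n + (k + 1)),
      show n + (k + 1) - (k + 1) = n by omega, show n + (k + 1) - (n + 1) = k by omega]
    simp only [Nat.factorial_succ]
    push_cast
    field_simp
    ring

def ballotCoeff (n m : ℕ) : ℚ := if m ≤ n then ballot n m else 0

theorem ballotCoeff_zero_right (n : ℕ) : ballotCoeff n 0 = 1 := by
  simp [ballotCoeff, ballot_zero_right]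

theorem ballotCoeff_zero_left (m : ℕ) : ballotCoeff 0 m = if m = 0 then 1 else 0 := by
  rcases m with _ | m
  · exact ballotCoeff_zero_right 0
  · simp [ballotCoeff]

theorem ballotCoeff_succ_succ (n m : ℕ) :
    ballotCoeff (n + 1) (m + 1) - ballotCoeff n (m + 1) - ballotCoeff (n + 1) m =
      -if m = n + 1 then (catalan (n + 1) : ℚ) else 0 := by
  unfold ballotCoeff
  rcases lt_trichotomy m n with hlt | rfl | hgt
  · simp only [if_pos (show m + 1 ≤ n + 1 by omega), if_pos (show m + 1 ≤ n by omega),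
      if_pos (show m ≤ n + 1 by omega), if_neg (show m ≠ n + 1 by omega), ballot_succ_succ]
    ring
  · simp [ballot_succ_succ, ballot_self_succ]
  · rcases (show m = n + 1 ∨ n + 1 < m by omega) with rfl | hgt'
    · simp [ballot_self]
    · simp only [if_neg (show ¬m + 1 ≤ n + 1 by omega), if_neg (show ¬m + 1 ≤ n by omega),
        if_neg (show ¬m ≤ n + 1 by omega), if_neg (show m ≠ n + 1 by omega)]
      ring

/-- `∑_{0 ≤ m ≤ n} b_{n,m,0} x^n y^m = (1 - y·C(xy)) / (1 - x - y)` as formal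
power series, where `b_{n,m,0} = (n+m)!(n-m+1)/(m!(n+1)!)` and `C` is the
Catalan generating function; stated in cleared-denominator form
`(1 - x - y) * F = 1 - G` with `G = y·C(xy)`. -/
theorem stmt14 (F G : MvPowerSeries (Fin 2) ℚ)
    (hF : ∀ n m : ℕ,
      MvPowerSeries.coeff (Finsupp.single 0 n + Finsupp.single 1 m) F =
        if m ≤ n then ((n + m)! : ℚ) * ((n : ℚ) - m + 1) / ((m ! : ℚ) * ((n + 1)! : ℚ))
        else 0)
    (hG : ∀ n m : ℕ,
      MvPowerSeries.coeff (Finsupp.single 0 n + Finsupp.single 1 m) G =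
        if m = n + 1 then (catalan n : ℚ) else 0) :
    (1 - MvPowerSeries.X 0 - MvPowerSeries.X 1) * F = 1 - G := by
  have hF' : ∀ n m : ℕ,
      MvPowerSeries.coeff (Finsupp.single 0 n + Finsupp.single 1 m) F = ballotCoeff n m := by
    intro n m
    rw [hF, ballotCoeff]
    split_ifs with h
    · rw [ballot_eq_factorial (by omega)]
    · rfl
  ext d
  rw [Finsupp.eq_single_zero_add_single_one d]
  generalize d 0 = n, d 1 = m
  simp only [sub_mul, one_mul, map_sub, coeff_one_single_add_single]
  rcases n with _ | n <;> rcases m with _ | m <;>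
    simp only [coeff_X_zero_mul_single_zero, coeff_X_one_mul_single_zero,
      coeff_X_zero_mul_single_succ, coeff_X_one_mul_single_succ, hF', hG,
      ballotCoeff_zero_left, ballotCoeff_zero_right, ballotCoeff_succ_succ] <;>
    simp
end

section
/- Let f_{n,k} = Σ_{1 ≤ i_1 < ⋯ < i_k ≤ n} ∏_{j=1}^{k}(i_j + j − 1) for 1 ≤ k ≤ n and f_{n,0} = 1. Then f_{n,k} = (n−k+1)(n−k+2)⋯(n+k)/(2^k · k!) = binom(n+k, 2k)·(2k−1)!! for 0 ≤ k ≤ n. -/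
/-!
Removing the largest element `n + 1` splits the sum into the subsets avoiding it and those
containing it; in the latter `n + 1` is the last of `k + 1` sorted entries and contributes the
factor `n + 1 + k`. Hence `f (n+1) (k+1) = f n (k+1) + (n+1+k) f n k`, the recurrence also
satisfied by `C(n+k, 2k) (2k-1)‼` by Pascal's rule. Finally
`C(n+k, 2k) (2k)! = (n-k+1)⋯(n+k)` and `(2k)! = 2^k k! (2k-1)‼`.
-/

open Nat Finset

theorem Finset.sort_insert_of_forall_lt {α : Type*} [LinearOrder α] {a : α} {s : Finset α}
    (h : ∀ b ∈ s, b < a) : (insert a s).sort (· ≤ ·) = s.sort (· ≤ ·) ++ [a] := by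
  have ha : a ∉ s := fun has => lt_irrefl a (h a has)
  have hperm : List.Perm ((insert a s).sort (· ≤ ·)) (s.sort (· ≤ ·) ++ [a]) :=
    (sort_perm_toList _ _).trans <| (toList_insert ha).trans <|
      (List.Perm.cons a (sort_perm_toList _ _).symm).trans (List.perm_append_singleton _ _).symm
  refine List.Perm.eq_of_pairwise' (pairwise_sort _ _) ?_ hperm
  rw [List.pairwise_append]
  refine ⟨pairwise_sort _ _, List.pairwise_singleton _ a, fun b hb c hc => ?_⟩
  rw [List.mem_singleton.1 hc]
  exact (h b ((mem_sort _).1 hb)).le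

theorem Finset.sum_powersetCard_succ_insert {α β : Type*} [DecidableEq α] [AddCommMonoid β]
    {a : α} {s : Finset α} (ha : a ∉ s) (k : ℕ) (f : Finset α → β) :
    ∑ t ∈ powersetCard (k + 1) (insert a s), f t =
      ∑ t ∈ powersetCard (k + 1) s, f t + ∑ t ∈ powersetCard k s, f (insert a t) := by
  have hnot {t : Finset α} {j : ℕ} (ht : t ∈ powersetCard j s) : a ∉ t :=
    fun hat => ha ((mem_powersetCard.1 ht).1 hat)
  rw [powersetCard_succ_insert ha, sum_union, sum_image]
  · intro t ht u hu htu
    rw [← erase_insert (hnot ht), htu, erase_insert (hnot hu)]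
  · rw [disjoint_left]
    rintro _ ht hmem
    obtain ⟨u, -, rfl⟩ := mem_image.1 hmem
    exact hnot ht (mem_insert_self a u)

/-- `shiftedSortProd {i₁ < ⋯ < i_k} = ∏ⱼ (i_j + j - 1)`, with `0`-based positions. -/
def shiftedSortProd (s : Finset ℕ) : ℕ :=
  ((s.sort (· ≤ ·)).mapIdx fun j a => a + j).prod

theorem shiftedSortProd_insert_of_forall_lt {a : ℕ} {s : Finset ℕ} (h : ∀ b ∈ s, b < a) :
    shiftedSortProd (insert a s) = (a + #s) * shiftedSortProd s := by
  rw [shiftedSortProd, shiftedSortProd, sort_insert_of_forall_lt h, List.mapIdx_append_one,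
    List.prod_append, length_sort, List.prod_singleton, mul_comm]

theorem choose_mul_doubleFactorial_succ_succ (n k : ℕ) :
    (n + 1 + (k + 1)).choose (2 * (k + 1)) * (2 * (k + 1) - 1)‼ =
      (n + (k + 1)).choose (2 * (k + 1)) * (2 * (k + 1) - 1)‼ +
        (n + 1 + k) * ((n + k).choose (2 * k) * (2 * k - 1)‼) := by
  have hodd : (2 * (k + 1) - 1)‼ = (2 * k + 1) * (2 * k - 1)‼ := by
    rw [show 2 * (k + 1) - 1 = 2 * k + 1 by omega, doubleFactorial_add_one]
  have hpascal : (n + 1 + (k + 1)).choose (2 * (k + 1)) =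
      (n + k + 1).choose (2 * k + 1) + (n + k + 1).choose (2 * k + 2) := by
    rw [show n + 1 + (k + 1) = n + k + 1 + 1 by ring, show 2 * (k + 1) = 2 * k + 1 + 1 by ring,
      choose_succ_succ']
  have habsorb : (n + k + 1) * (n + k).choose (2 * k) =
      (n + k + 1).choose (2 * k + 1) * (2 * k + 1) := add_one_mul_choose_eq (n + k) (2 * k)
  rw [hodd, hpascal, show n + (k + 1) = n + k + 1 by ring, show n + 1 + k = n + k + 1 by ring,
    show 2 * (k + 1) = 2 * k + 2 by ring, ← mul_assoc (n + k + 1), habsorb]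
  ring

theorem sum_powersetCard_Icc_shiftedSortProd (n k : ℕ) :
    ∑ s ∈ powersetCard k (Icc 1 n), shiftedSortProd s =
      (n + k).choose (2 * k) * (2 * k - 1)‼ := by
  induction n generalizing k with
  | zero =>
    rcases k with _ | k
    · simp [shiftedSortProd]
    · simp [choose_eq_zero_of_lt (show k + 1 < 2 * (k + 1) by omega)]
  | succ n ih =>
    rcases k with _ | k
    · simp [shiftedSortProd]
    have hlast : ∀ t ∈ powersetCard k (Icc 1 n),
        shiftedSortProd (insert (n + 1) t) = (n + 1 + k) * shiftedSortProd t := by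
      intro t ht
      obtain ⟨hsub, hcard⟩ := mem_powersetCard.1 ht
      rw [shiftedSortProd_insert_of_forall_lt fun b hb => ?_, hcard]
      exact Nat.lt_succ_of_le (mem_Icc.1 (hsub hb)).2
    rw [← insert_Icc_right_eq_Icc_add_one (by omega),
      sum_powersetCard_succ_insert (by simp), sum_congr rfl hlast, ← mul_sum, ih, ih,
      choose_mul_doubleFactorial_succ_succ]

theorem Nat.factorial_two_mul_eq_mul_doubleFactorial (k : ℕ) :
    (2 * k)! = 2 ^ k * k ! * (2 * k - 1)‼ := by
  rcases k with _ | k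
  · rfl
  · rw [show 2 * (k + 1) = 2 * k + 1 + 1 by ring, factorial_eq_mul_doubleFactorial,
      show 2 * k + 1 + 1 = 2 * (k + 1) by ring, doubleFactorial_two_mul,
      show 2 * (k + 1) - 1 = 2 * k + 1 by omega]

theorem cast_choose_mul_doubleFactorial {K : Type*} [Field K] [CharZero K] {n k : ℕ}
    (hk : k ≤ n) :
    (((n + k).choose (2 * k) * (2 * k - 1)‼ : ℕ) : K) =
      (∏ j ∈ range (2 * k), ((n : K) - k + 1 + j)) / (2 ^ k * k !) := by
  obtain ⟨m, rfl⟩ : ∃ m, n = m + k := ⟨n - k, by omega⟩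
  have hprod : ∏ j ∈ range (2 * k), ((↑(m + k) : K) - k + 1 + j) =
      (2 * k)! * (m + 2 * k).choose (2 * k) := by
    rw [← Nat.cast_mul, ← ascFactorial_eq_factorial_mul_choose, ascFactorial_eq_prod_range]
    push_cast
    exact prod_congr rfl fun j _ => by ring
  rw [hprod, factorial_two_mul_eq_mul_doubleFactorial, show m + k + k = m + 2 * k by ring]
  have hk! : (k ! : K) ≠ 0 := Nat.cast_ne_zero.2 (factorial_ne_zero k)
  push_cast
  field_simp

/-- Closed formula: `f n k = (n-k+1)(n-k+2)⋯(n+k)/(2^k·k!) = C(n+k,2k)·(2k-1)!!`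
for `0 ≤ k ≤ n`, where `f n k = ∑_{1 ≤ i₁ < ⋯ < i_k ≤ n} ∏_j (i_j + j - 1)`. -/
theorem stmt16 (f : ℕ → ℕ → ℕ)
    (hf : ∀ n k, f n k =
      ∑ s ∈ Finset.powersetCard k (Finset.Icc 1 n),
        (((s.sort (· ≤ ·)).mapIdx fun j a => a + j).prod)) :
    ∀ n k, k ≤ n →
      f n k = (n + k).choose (2 * k) * (2 * k - 1)‼ ∧
      (f n k : ℚ) =
        (∏ j ∈ Finset.range (2 * k), ((n : ℚ) - k + 1 + j)) /
          ((2 : ℚ) ^ k * (k ! : ℚ)) := by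
  intro n k hk
  have hclosed : f n k = (n + k).choose (2 * k) * (2 * k - 1)‼ :=
    (hf n k).trans (sum_powersetCard_Icc_shiftedSortProd n k)
  exact ⟨hclosed, hclosed ▸ cast_choose_mul_doubleFactorial hk⟩
end

section
/- Let b_{n,k} and u_{n,k} be two families of integers (0 ≤ k ≤ n) related by u_{n,k} = Σ_{i=0}^{k} (−1)^{i}·binom(2n+k, k−i)·binom(n−i, k−i)·(k−i)!·b_{n,i} for all 0 ≤ k ≤ n. Then the inverse relation holds: b_{n,k} = Σ_{i=0}^{k} (−1)^{i}·binom(2n+k, k−i)·binom(n−i, k−i)·(k−i)!·u_{n,i} for all 0 ≤ k ≤ n. -/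
open Nat Finset

/-- auxiliary double-binomial sum -/
private def Saux (p q m : ℕ) : ℤ :=
  ∑ a ∈ Finset.range (m + 1),
    (-1 : ℤ) ^ a * ((p + a).choose a : ℤ) * (q.choose (m - a) : ℤ)

private lemma Saux_zero (p q : ℕ) : Saux p q 0 = 1 := by
  simp [Saux]

private lemma SauxA (p q m : ℕ) : Saux p (q + 1) (m + 1) = Saux p q (m + 1) + Saux p q m := by
  have h : Saux p (q + 1) (m + 1) - Saux p q (m + 1)
      = ∑ a ∈ Finset.range (m + 2),
        (-1 : ℤ) ^ a * ((p + a).choose a : ℤ) *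
          (((q + 1).choose (m + 1 - a) : ℤ) - (q.choose (m + 1 - a) : ℤ)) := by
    unfold Saux
    rw [← Finset.sum_sub_distrib]
    exact Finset.sum_congr rfl fun a _ => by ring
  have h2 : ∑ a ∈ Finset.range (m + 2),
        (-1 : ℤ) ^ a * ((p + a).choose a : ℤ) *
          (((q + 1).choose (m + 1 - a) : ℤ) - (q.choose (m + 1 - a) : ℤ)) = Saux p q m := by
    rw [Finset.sum_range_succ]
    have hlast : m + 1 - (m + 1) = 0 := by omega
    rw [hlast]
    simp only [Nat.choose_zero_right]
    unfold Saux
    rw [show ((1:ℕ):ℤ) - ((1:ℕ):ℤ) = 0 by norm_num, mul_zero, add_zero]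
    refine Finset.sum_congr rfl fun a ha => ?_
    have ha' : a ≤ m := by simpa [Nat.lt_succ_iff] using ha
    have hs : m + 1 - a = (m - a) + 1 := by omega
    rw [hs, Nat.choose_succ_succ]
    push_cast
    ring
  linarith [h, h2]

private lemma SauxB (p q m : ℕ) :
    Saux (p + 1) q (m + 1) = Saux p q (m + 1) - Saux (p + 1) q m := by
  have h : Saux (p + 1) q (m + 1) - Saux p q (m + 1)
      = ∑ a ∈ Finset.range (m + 2),
        (-1 : ℤ) ^ a * (((p + 1 + a).choose a : ℤ) - ((p + a).choose a : ℤ)) *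
          (q.choose (m + 1 - a) : ℤ) := by
    unfold Saux
    rw [← Finset.sum_sub_distrib]
    exact Finset.sum_congr rfl fun a _ => by ring
  have h2 : ∑ a ∈ Finset.range (m + 2),
        (-1 : ℤ) ^ a * (((p + 1 + a).choose a : ℤ) - ((p + a).choose a : ℤ)) *
          (q.choose (m + 1 - a) : ℤ) = - Saux (p + 1) q m := by
    rw [Finset.sum_range_succ']
    have h0 : (-1 : ℤ) ^ 0 * (((p + 1 + 0).choose 0 : ℤ) - ((p + 0).choose 0 : ℤ)) *
        (q.choose (m + 1 - 0) : ℤ) = 0 := by simp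
    rw [h0, add_zero]
    unfold Saux
    rw [← Finset.sum_neg_distrib]
    refine Finset.sum_congr rfl fun a ha => ?_
    have hp : (p + 1 + (a + 1)).choose (a + 1)
        = (p + 1 + a).choose a + (p + a + 1).choose (a + 1) := by
      have : p + 1 + (a + 1) = (p + a + 1) + 1 := by ring
      rw [this, Nat.choose_succ_succ]
      congr 1
      · congr 1; omega
    have hs : m + 1 - (a + 1) = m - a := by omega
    rw [hp, hs]
    have hq : (p + a + 1).choose (a + 1) = (p + 1 + a).choose (a + 1)  := by
      congr 1; omega
    rw [hq]
    push_cast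
    ring_nf
  linarith [h, h2]

private lemma SauxC (p q m : ℕ) : Saux (p + 1) (q + 1) m = Saux p q m := by
  cases m with
  | zero => rw [Saux_zero, Saux_zero]
  | succ m' => rw [SauxA, SauxB]; ring

private lemma Saux_shift (p m : ℕ) : Saux p (p + m) m = Saux 0 m m := by
  induction p with
  | zero => simp
  | succ p ih => rw [show p + 1 + m = (p + m) + 1 from by ring, SauxC]; exact ih

private lemma Saux_key (p m : ℕ) (hm : m ≠ 0) : Saux p (p + m) m = 0 := by
  rw [Saux_shift]
  unfold Saux
  have : ∀ a ∈ Finset.range (m + 1),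
      (-1 : ℤ) ^ a * (((0 + a).choose a : ℤ)) * (m.choose (m - a) : ℤ)
        = (-1 : ℤ) ^ a * (m.choose a : ℤ) := by
    intro a ha
    have ha' : a ≤ m := by simpa [Nat.lt_succ_iff] using ha
    rw [Nat.zero_add, Nat.choose_self, Nat.choose_symm ha']
    simp
  rw [Finset.sum_congr rfl this]
  exact Int.alternating_sum_range_choose_of_ne hm

private lemma descFactorial_add' (x a b : ℕ) :
    x.descFactorial (a + b) = x.descFactorial a * (x - a).descFactorial b := by
  induction b with
  | zero => simp
  | succ b ih =>
    rw [show a + (b + 1) = (a + b) + 1 from rfl, Nat.descFactorial_succ, ih,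
      Nat.descFactorial_succ, show x - (a + b) = x - a - b from by omega]
    ring

example : True := trivial

private def Tk (n k i : ℕ) : ℤ :=
  (-1 : ℤ) ^ i * ((2 * n + k).choose (k - i) : ℤ) * ((n - i).choose (k - i) : ℤ) *
    ((k - i)! : ℤ)

private lemma term_eq (n j k a : ℕ) (hjk : j ≤ k) (hk : k ≤ n) (ha : a ≤ k - j) :
    Tk n k (k - a) * Tk n (k - a) j
      = (-1 : ℤ) ^ (k + j) * ((2 * n + k).descFactorial (k - j) : ℤ) *
        ((-1 : ℤ) ^ a * (((n - k) + a).choose a : ℤ) *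
          ((((n - k) + (k - j)).choose ((k - j) - a)) : ℤ)) := by
  have hak : a ≤ k := by omega
  unfold Tk
  have e1 : k - (k - a) = a := by omega
  have e2 : n - (k - a) = (n - k) + a := by omega
  have e3 : (k - a) - j = (k - j) - a := by omega
  have e4 : 2 * n + (k - a) = (2 * n + k) - a := by omega
  have e5 : n - j = (n - k) + (k - j) := by omega
  rw [e1, e2, e3, e4, e5]
  have d1 : (2 * n + k).descFactorial (k - j)
      = ((2 * n + k).choose a * a !) * (((2 * n + k) - a).choose ((k - j) - a) * ((k - j) - a)!) := by
    have h1 := descFactorial_add' (2 * n + k) a ((k - j) - a)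
    rw [show a + ((k - j) - a) = k - j from by omega] at h1
    rw [h1, Nat.descFactorial_eq_factorial_mul_choose, Nat.descFactorial_eq_factorial_mul_choose]
    ring
  have hsq : (-1 : ℤ) ^ a * (-1 : ℤ) ^ a = 1 := by
    rw [← pow_add]; exact Even.neg_one_pow ⟨a, rfl⟩
  have s1 : (-1 : ℤ) ^ (k - a) = (-1 : ℤ) ^ k * (-1 : ℤ) ^ a := by
    have h1 : (-1 : ℤ) ^ (k - a) * (-1 : ℤ) ^ a = (-1 : ℤ) ^ k := by
      rw [← pow_add, Nat.sub_add_cancel hak]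
    calc (-1 : ℤ) ^ (k - a) = (-1 : ℤ) ^ (k - a) * ((-1 : ℤ) ^ a * (-1 : ℤ) ^ a) := by
          rw [hsq, mul_one]
      _ = (-1 : ℤ) ^ k * (-1 : ℤ) ^ a := by rw [← mul_assoc, h1]
  have d1' : ((2 * n + k).descFactorial (k - j) : ℤ)
      = ((2 * n + k).choose a : ℤ) * (a ! : ℤ) *
        ((((2 * n + k) - a).choose ((k - j) - a)) : ℤ) * (((k - j) - a)! : ℤ) := by
    exact_mod_cast congrArg (Nat.cast : ℕ → ℤ) (by rw [d1]; ring)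
  rw [s1, pow_add, d1']
  ring

private lemma orth (n j k : ℕ) (hjk : j ≤ k) (hk : k ≤ n) :
    ∑ i ∈ Finset.Icc j k, Tk n k i * Tk n i j = if j = k then 1 else 0 := by
  have hre : ∑ i ∈ Finset.Icc j k, Tk n k i * Tk n i j
      = ∑ a ∈ Finset.range (k - j + 1), Tk n k (k - a) * Tk n (k - a) j := by
    refine Finset.sum_nbij' (fun i => k - i) (fun a => k - a) ?_ ?_ ?_ ?_ ?_
    · intro x hx; simp_all [Finset.mem_Icc, Finset.mem_range]; omega
    · intro x hx; simp_all [Finset.mem_Icc, Finset.mem_range]; omega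
    · intro x hx; simp_all [Finset.mem_Icc]; omega
    · intro x hx; simp_all [Finset.mem_range]; omega
    · intro x hx
      have hx' : k - (k - x) = x := by
        simp only [Finset.mem_Icc] at hx; omega
      rw [hx']
  rw [hre]
  have hS : ∑ a ∈ Finset.range (k - j + 1), Tk n k (k - a) * Tk n (k - a) j
      = (-1 : ℤ) ^ (k + j) * ((2 * n + k).descFactorial (k - j) : ℤ) *
        Saux (n - k) ((n - k) + (k - j)) (k - j) := by
    unfold Saux
    rw [Finset.mul_sum]
    refine Finset.sum_congr rfl fun a ha => ?_
    rw [term_eq n j k a hjk hk (Nat.lt_succ_iff.mp (Finset.mem_range.mp ha))]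
  rw [hS]
  by_cases hjk' : j = k
  · subst hjk'
    simp [Nat.sub_self, Saux_zero, ← two_mul, pow_mul]
  · rw [Saux_key (n - k) (k - j) (by omega), if_neg hjk']
    ring

/-- The transformation with kernel
`T k i = (-1)^i * C(2n+k, k-i) * C(n-i, k-i) * (k-i)!` is an involution:
if `u k = ∑_{i=0}^k T k i * b i` for all `0 ≤ k ≤ n`, then
`b k = ∑_{i=0}^k T k i * u i` for all `0 ≤ k ≤ n`. -/
theorem stmt18 (n : ℕ) (b u : ℕ → ℤ)
    (h : ∀ k, k ≤ n → u k =
      ∑ i ∈ Finset.range (k + 1),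
        (-1 : ℤ) ^ i * ((2 * n + k).choose (k - i) : ℤ) * ((n - i).choose (k - i) : ℤ) *
          ((k - i)! : ℤ) * b i) :
    ∀ k, k ≤ n → b k =
      ∑ i ∈ Finset.range (k + 1),
        (-1 : ℤ) ^ i * ((2 * n + k).choose (k - i) : ℤ) * ((n - i).choose (k - i) : ℤ) *
          ((k - i)! : ℤ) * u i := by
  intro k hk
  show b k = ∑ i ∈ Finset.range (k + 1), Tk n k i * u i
  have step1 : ∑ i ∈ Finset.range (k + 1), Tk n k i * u i
      = ∑ i ∈ Finset.range (k + 1), ∑ j ∈ Finset.range (i + 1), Tk n k i * (Tk n i j * b j) := by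
    refine Finset.sum_congr rfl fun i hi => ?_
    have hi' : i ≤ n := le_trans (Nat.lt_succ_iff.mp (Finset.mem_range.mp hi)) hk
    rw [h i hi', Finset.mul_sum]
    simp only [Tk]
  have step2 : ∑ i ∈ Finset.range (k + 1), ∑ j ∈ Finset.range (i + 1), Tk n k i * (Tk n i j * b j)
      = ∑ j ∈ Finset.range (k + 1), ∑ i ∈ Finset.Icc j k, Tk n k i * (Tk n i j * b j) := by
    refine Finset.sum_comm' ?_
    intro i j
    simp only [Finset.mem_range, Finset.mem_Icc]
    omega
  have step3 : ∀ j ∈ Finset.range (k + 1),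
      ∑ i ∈ Finset.Icc j k, Tk n k i * (Tk n i j * b j) = (if j = k then 1 else 0) * b j := by
    intro j hj
    have hjk : j ≤ k := Nat.lt_succ_iff.mp (Finset.mem_range.mp hj)
    calc ∑ i ∈ Finset.Icc j k, Tk n k i * (Tk n i j * b j)
        = (∑ i ∈ Finset.Icc j k, Tk n k i * Tk n i j) * b j := by
          rw [Finset.sum_mul]
          exact Finset.sum_congr rfl fun i _ => by ring
      _ = (if j = k then 1 else 0) * b j := by rw [orth n j k hjk hk]
  rw [step1, step2, Finset.sum_congr rfl step3]
  simp only [ite_mul, one_mul, zero_mul, Finset.sum_ite_eq']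
  simp
end
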